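/- arXiv:1504.02006 — 5 statements merged into one kernel-verified Lean document; each statement's English description precedes it below -/
import Mathlib

section
/- Let ((ξ_i, ζ_i))_{i≥1} be i.i.d. copies of an ℕ₀²-valued random vector (ξ, ζ). For positive integers n and ℓ, P(∑_{i=1}^ℓ (ξ_i, ζ_i) = (ℓ−1, n−ℓ) and ∑_{i=1}^m ξ_i ≥ m for all m < ℓ) = (1/ℓ) P(∑_{i=1}^ℓ (ξ_i, ζ_i) = (ℓ−1, n−ℓ)). -/
open MeasureTheory ProbabilityTheory Finset Fin.NatCast

/-!
Write `Sₘ = ξ₁ + ⋯ + ξₘ - m`, the indices read cyclically modulo `ℓ`. Since `S_ℓ = -1`, the walk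
drops by one every period, and the ballot condition for the rotation starting at `r` says that
`S` stays `≥ S_r` on `[r, r + ℓ)`. This holds exactly when `r` is the first minimum of `S` on
`[0, ℓ)` (cycle lemma), so every sequence in the event `∑ (ξᵢ, ζᵢ) = (ℓ - 1, n - ℓ)` has exactly one
of its `ℓ` rotations satisfying the ballot condition. The event is rotation invariant, and so is
the law `ν^⊗ℓ` of an i.i.d. sequence, hence all `ℓ` rotated ballot events have the same
probability and partition the event.
-/

section BallotWalk

variable {ℓ : ℕ} [NeZero ℓ] (a : Fin ℓ → ℕ)

def ballotWalk (m : ℕ) : ℤ := ∑ i ∈ range m, (a (i : Fin ℓ) : ℤ) - m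

lemma ballotWalk_add (k m : ℕ) :
    ballotWalk a (k + m) =
      ballotWalk a k + ∑ i ∈ range m, (a ((k + i : ℕ) : Fin ℓ) : ℤ) - m := by
  simp only [ballotWalk, sum_range_add]
  push_cast
  ring

lemma sum_range_comp_natCast_add (k : ℕ) :
    ∑ i ∈ range ℓ, a ((k + i : ℕ) : Fin ℓ) = ∑ i, a i := by
  rw [← Fin.sum_univ_eq_sum_range (fun i => a ((k + i : ℕ) : Fin ℓ))]
  simp only [Nat.cast_add, Fin.cast_val_eq_self]
  exact Equiv.sum_comp (Equiv.addLeft (k : Fin ℓ)) a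

variable {a}

lemma ballotWalk_add_period (h : ∑ i, a i = ℓ - 1) (k : ℕ) :
    ballotWalk a (k + ℓ) = ballotWalk a k - 1 := by
  have hℓ : 1 ≤ ℓ := Nat.one_le_iff_ne_zero.2 (NeZero.ne ℓ)
  rw [ballotWalk_add, ← Nat.cast_sum, sum_range_comp_natCast_add, h, Nat.cast_sub hℓ]
  ring

variable (a) in
lemma forall_le_sum_rotate_iff (r : Fin ℓ) :
    (∀ m < ℓ, m ≤ ∑ i ∈ range m, a (r + (i : Fin ℓ))) ↔
      ∀ m < ℓ, ballotWalk a r ≤ ballotWalk a (r + m) := by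
  refine forall₂_congr fun m _ => ?_
  simp only [ballotWalk_add, Nat.cast_add, Fin.cast_val_eq_self]
  constructor <;> intro h'
  · have : (m : ℤ) ≤ ∑ i ∈ range m, (a (r + (i : Fin ℓ)) : ℤ) := by exact_mod_cast h'
    linarith
  · have : (m : ℤ) ≤ ∑ i ∈ range m, (a (r + (i : Fin ℓ)) : ℤ) := by linarith
    exact_mod_cast this

lemma exists_ballotWalk_le (h : ∑ i, a i = ℓ - 1) :
    ∃ r < ℓ, ∀ m < ℓ, ballotWalk a r ≤ ballotWalk a (r + m) := by
  have hmin : ∃ r, r < ℓ ∧ ∀ j < ℓ, ballotWalk a r ≤ ballotWalk a j := by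
    obtain ⟨r, hr, hle⟩ := exists_min_image (range ℓ) (ballotWalk a)
      (nonempty_range_iff.2 (NeZero.ne ℓ))
    exact ⟨r, mem_range.1 hr, fun j hj => hle j (mem_range.2 hj)⟩
  classical
  obtain ⟨hrℓ, hr⟩ := Nat.find_spec hmin
  have hfirst : ∀ j < Nat.find hmin, ballotWalk a (Nat.find hmin) < ballotWalk a j := by
    intro j hj
    by_contra! hle
    exact Nat.find_min hmin hj ⟨hj.trans hrℓ, fun i hi => hle.trans (hr i hi)⟩
  refine ⟨Nat.find hmin, hrℓ, fun m hm => ?_⟩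
  rcases lt_or_ge (Nat.find hmin + m) ℓ with hlt | hge
  · exact hr _ hlt
  · obtain ⟨j, hj⟩ : ∃ j, Nat.find hmin + m = j + ℓ := ⟨_, (Nat.sub_add_cancel hge).symm⟩
    have := hfirst j (by omega)
    rw [hj, ballotWalk_add_period h]
    omega

lemma eq_of_ballotWalk_le (h : ∑ i, a i = ℓ - 1) {u v : ℕ} (hu : u < ℓ) (hv : v < ℓ)
    (hu' : ∀ m < ℓ, ballotWalk a u ≤ ballotWalk a (u + m))
    (hv' : ∀ m < ℓ, ballotWalk a v ≤ ballotWalk a (v + m)) : u = v := by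
  wlog huv : u < v generalizing u v
  · rcases (not_lt.1 huv).eq_or_lt with h' | h'
    · exact h'.symm
    · exact (this hv hu hv' hu' h').symm
  have h1 := hu' (v - u) (by omega)
  have h2 := hv' (u + ℓ - v) (by omega)
  rw [Nat.add_sub_cancel' huv.le] at h1
  rw [Nat.add_sub_cancel' (by omega), ballotWalk_add_period h] at h2
  omega

theorem existsUnique_forall_le_sum_rotate (h : ∑ i, a i = ℓ - 1) :
    ∃! r : Fin ℓ, ∀ m < ℓ, m ≤ ∑ i ∈ range m, a (r + (i : Fin ℓ)) := by
  simp only [forall_le_sum_rotate_iff]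
  obtain ⟨r, hr, hle⟩ := exists_ballotWalk_le h
  exact ⟨⟨r, hr⟩, hle, fun s hs => Fin.ext (eq_of_ballotWalk_le h s.isLt hr hs hle)⟩

end BallotWalk

theorem measure_eq_card_mul_measure_inter {α ι : Type*} [MeasurableSpace α] [Fintype ι]
    {ν : Measure α} {f : ι → α → α} (hf : ∀ i, MeasurePreserving (f i) ν ν) {B C : Set α}
    (hB : MeasurableSet B) (hC : MeasurableSet C) (hfB : ∀ i, f i ⁻¹' B = B)
    (hBC : ∀ a ∈ B, ∃! i, f i a ∈ C) :
    ν B = Fintype.card ι * ν (B ∩ C) := by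
  have hcover : B = ⋃ i, B ∩ f i ⁻¹' C := by
    ext a
    simp only [Set.mem_iUnion, Set.mem_inter_iff, Set.mem_preimage, exists_and_left]
    exact ⟨fun ha => ⟨ha, (hBC a ha).exists⟩, And.left⟩
  have hdisj : Pairwise (Function.onFun Disjoint fun i => B ∩ f i ⁻¹' C) :=
    fun i j hij => Set.disjoint_left.2 fun a hi hj => hij ((hBC a hi.1).unique hi.2 hj.2)
  have hpiece : ∀ i, ν (B ∩ f i ⁻¹' C) = ν (B ∩ C) := fun i => by
    rw [← (hf i).measure_preimage (hB.inter hC).nullMeasurableSet, Set.preimage_inter, hfB]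
  conv_lhs => rw [hcover]
  rw [measure_iUnion hdisj fun i => hB.inter ((hf i).measurable hC), tsum_fintype]
  simp only [hpiece, sum_const, card_univ, nsmul_eq_mul]

theorem measurePreserving_comp_perm {ι β : Type*} [Fintype ι] [MeasurableSpace β]
    (ν : Measure β) [SigmaFinite ν] (e : Equiv.Perm ι) :
    MeasurePreserving (fun a : ι → β => a ∘ e) (Measure.pi fun _ => ν) (Measure.pi fun _ => ν) :=
  measurePreserving_arrowCongr' _ _ e.symm (MeasurableEquiv.refl β) fun _ =>
    MeasurePreserving.id ν

theorem map_fun_fin_eq_pi_of_identDistrib {Ω β : Type*} [MeasurableSpace Ω] [MeasurableSpace β]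
    {μ : Measure Ω} {Y : ℕ → Ω → β} (hY : ∀ i, Measurable (Y i))
    (hindep : iIndepFun Y μ) (hident : ∀ i, IdentDistrib (Y i) (Y 0) μ μ) (ℓ : ℕ) :
    μ.map (fun ω (i : Fin ℓ) => Y i ω) = Measure.pi fun _ => μ.map (Y 0) := by
  rw [(hindep.precomp Fin.val_injective).map_fun_eq_pi_map fun i : Fin ℓ => (hY i).aemeasurable]
  simp only [(hident _).map_eq]

theorem measure_pi_eq_mul_measure_inter_ballot {ℓ : ℕ} [NeZero ℓ] {β : Type*} [MeasurableSpace β]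
    [Countable β] [MeasurableSingletonClass β] (ν : Measure β) [SigmaFinite ν] (g : β → ℕ)
    {B : Set (Fin ℓ → β)} (hB : ∀ r : Fin ℓ, (fun a => a ∘ Equiv.addLeft r) ⁻¹' B = B)
    (hsum : ∀ a ∈ B, ∑ i, g (a i) = ℓ - 1) :
    Measure.pi (fun _ => ν) B =
      ℓ * Measure.pi (fun _ => ν) (B ∩ {a | ∀ m < ℓ, m ≤ ∑ i ∈ range m, g (a i)}) := by
  simpa using measure_eq_card_mul_measure_inter (fun r => measurePreserving_comp_perm ν _)
    .of_discrete (.of_discrete (s := {a : Fin ℓ → β | ∀ m < ℓ, m ≤ ∑ i ∈ range m, g (a i)})) hB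
    fun a ha => existsUnique_forall_le_sum_rotate (hsum a ha)

theorem cycle_lemma_two_dim_general {Ω : Type*} [MeasurableSpace Ω] (μ : Measure Ω)
    [IsProbabilityMeasure μ] (ξ ζ : ℕ → Ω → ℕ)
    (hmeasξ : ∀ i, Measurable (ξ i)) (hmeasζ : ∀ i, Measurable (ζ i))
    (hindep : iIndepFun
      (fun i => fun ω => (ξ i ω, ζ i ω)) μ)
    (hident : ∀ i, IdentDistrib (fun ω => (ξ i ω, ζ i ω))
      (fun ω => (ξ 0 ω, ζ 0 ω)) μ μ)
    (n ℓ : ℕ) (hℓ : 1 ≤ ℓ) :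
    (μ {ω | (∑ i ∈ range ℓ, ξ i ω = ℓ - 1) ∧ (∑ i ∈ range ℓ, ζ i ω = n - ℓ) ∧
            ∀ m < ℓ, m ≤ ∑ i ∈ range m, ξ i ω}).toReal =
      (1 / ℓ) *
        (μ {ω | (∑ i ∈ range ℓ, ξ i ω = ℓ - 1) ∧
                (∑ i ∈ range ℓ, ζ i ω = n - ℓ)}).toReal := by
  have : NeZero ℓ := ⟨Nat.one_le_iff_ne_zero.1 hℓ⟩
  have hY : ∀ i, Measurable fun ω => (ξ i ω, ζ i ω) := fun i => (hmeasξ i).prodMk (hmeasζ i)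
  set X : Ω → Fin ℓ → ℕ × ℕ := fun ω i => (ξ i ω, ζ i ω)
  set B : Set (Fin ℓ → ℕ × ℕ) := {a | ∑ i, (a i).1 = ℓ - 1 ∧ ∑ i, (a i).2 = n - ℓ}
  have hrot : ∀ r : Fin ℓ, (fun a => a ∘ Equiv.addLeft r) ⁻¹' B = B := fun r => by
    ext a
    simp only [B, Set.mem_preimage, Set.mem_ofPred_eq, Function.comp_apply,
      Equiv.sum_comp (Equiv.addLeft r) fun i => (a i).1,
      Equiv.sum_comp (Equiv.addLeft r) fun i => (a i).2]
  have hsum : ∀ ω, ∑ i, (X ω i).1 = ∑ i ∈ range ℓ, ξ i ω ∧ ∑ i, (X ω i).2 = ∑ i ∈ range ℓ, ζ i ω :=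
    fun ω => ⟨Fin.sum_univ_eq_sum_range (ξ · ω) ℓ, Fin.sum_univ_eq_sum_range (ζ · ω) ℓ⟩
  have hsum_lt : ∀ ω, ∀ m < ℓ, ∑ i ∈ range m, (X ω i).1 = ∑ i ∈ range m, ξ i ω := fun ω m hm =>
    sum_congr rfl fun i hi => by simp only [X, Fin.val_cast_of_lt ((mem_range.1 hi).trans hm)]
  have hmeas : Measurable X := measurable_pi_lambda _ fun i => hY i
  have key := measure_pi_eq_mul_measure_inter_ballot (μ.map fun ω => (ξ 0 ω, ζ 0 ω)) Prod.fst
    hrot fun a ha => ha.1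
  rw [← map_fun_fin_eq_pi_of_identDistrib hY hindep hident, Measure.map_apply hmeas .of_discrete,
    Measure.map_apply hmeas .of_discrete] at key
  simp +contextual only [B, Set.preimage_ofPred_eq, hsum, hsum_lt,
    ← Set.ofPred_and, and_assoc] at key
  rw [key, ENNReal.toReal_mul, ENNReal.toReal_natCast]
  field_simp

/-- **A two-dimensional cycle-lemma identity.** For i.i.d. copies `(ξᵢ, ζᵢ)` of an
`ℕ₀²`-valued random vector, and positive integers `ℓ ≤ n`,
`P(∑_{i=1}^ℓ (ξᵢ, ζᵢ) = (ℓ−1, n−ℓ) and ∑_{i=1}^m ξᵢ ≥ m for all m < ℓ)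
  = (1/ℓ) · P(∑_{i=1}^ℓ (ξᵢ, ζᵢ) = (ℓ−1, n−ℓ))`. -/
theorem cycle_lemma_two_dim {Ω : Type*} [MeasurableSpace Ω] (μ : Measure Ω)
    [IsProbabilityMeasure μ] (ξ ζ : ℕ → Ω → ℕ)
    (hmeasξ : ∀ i, Measurable (ξ i)) (hmeasζ : ∀ i, Measurable (ζ i))
    (hindep : iIndepFun
      (fun i => fun ω => (ξ i ω, ζ i ω)) μ)
    (hident : ∀ i, IdentDistrib (fun ω => (ξ i ω, ζ i ω))
      (fun ω => (ξ 0 ω, ζ 0 ω)) μ μ)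
    (n ℓ : ℕ) (hℓ : 1 ≤ ℓ) (hn : ℓ ≤ n) :
    (μ {ω | (∑ i ∈ range ℓ, ξ i ω = ℓ - 1) ∧ (∑ i ∈ range ℓ, ζ i ω = n - ℓ) ∧
            ∀ m < ℓ, m ≤ ∑ i ∈ range m, ξ i ω}).toReal =
      (1 / ℓ) *
        (μ {ω | (∑ i ∈ range ℓ, ξ i ω = ℓ - 1) ∧
                (∑ i ∈ range ℓ, ζ i ω = n - ℓ)}).toReal :=
  cycle_lemma_two_dim_general μ ξ ζ hmeasξ hmeasζ hindep hident n ℓ hℓ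
end

section
/- Let f: [0,1] → [0,∞) be continuous with f(0) = f(1) = 0, and define d(u,v) = f(u) + f(v) − 2·inf_{u ≤ s ≤ v} f(s) for u ≤ v (and symmetrically for v ≤ u). Then d is a premetric on [0,1]: it is nonnegative, symmetric, vanishes on the diagonal, and satisfies the triangle inequality. -/
open Set

/-
Writing `m(u, v)` for the infimum of `f` between `u` and `v`, the triangle inequality
`d(u, w) ≤ d(u, v) + d(v, w)` amounts to `m(u, v) + m(v, w) ≤ m(u, w) + f v`. Since the interval
between `u` and `w` is covered by those between `u, v` and `v, w`, the smaller of `m(u, v)` and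
`m(v, w)` is at most `m(u, w)`, while the larger one is at most `f v`.
-/

section

variable {α : Type*} [LinearOrder α] {f : α → ℝ} {u v w : α}

noncomputable def excursionDist (f : α → ℝ) (u v : α) : ℝ :=
  f u + f v - 2 * sInf (f '' uIcc u v)

theorem excursionDist_comm (f : α → ℝ) (u v : α) : excursionDist f u v = excursionDist f v u := by
  rw [excursionDist, excursionDist, uIcc_comm, add_comm (f u)]

theorem excursionDist_self (f : α → ℝ) (u : α) : excursionDist f u u = 0 := by
  rw [excursionDist, uIcc_self, image_singleton, csInf_singleton]
  ring

theorem sInf_image_uIcc_le_left (hb : BddBelow (f '' uIcc u v)) : sInf (f '' uIcc u v) ≤ f u :=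
  csInf_le hb (mem_image_of_mem f left_mem_uIcc)

theorem sInf_image_uIcc_le_right (hb : BddBelow (f '' uIcc u v)) : sInf (f '' uIcc u v) ≤ f v :=
  csInf_le hb (mem_image_of_mem f right_mem_uIcc)

theorem min_sInf_image_uIcc_le (huv : BddBelow (f '' uIcc u v)) (hvw : BddBelow (f '' uIcc v w)) :
    min (sInf (f '' uIcc u v)) (sInf (f '' uIcc v w)) ≤ sInf (f '' uIcc u w) := by
  rw [← csInf_union huv (nonempty_uIcc.image f) hvw (nonempty_uIcc.image f), ← image_union]
  exact csInf_le_csInf (huv.union hvw |>.mono (image_union f _ _).le) (nonempty_uIcc.image f)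
    (image_mono uIcc_subset_uIcc_union_uIcc)

theorem excursionDist_nonneg (hb : BddBelow (f '' uIcc u v)) : 0 ≤ excursionDist f u v := by
  have := sInf_image_uIcc_le_left hb
  have := sInf_image_uIcc_le_right hb
  rw [excursionDist]
  linarith

theorem excursionDist_triangle (huv : BddBelow (f '' uIcc u v)) (hvw : BddBelow (f '' uIcc v w)) :
    excursionDist f u w ≤ excursionDist f u v + excursionDist f v w := by
  have hmin := min_sInf_image_uIcc_le huv hvw
  have hmax : max (sInf (f '' uIcc u v)) (sInf (f '' uIcc v w)) ≤ f v :=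
    max_le (sInf_image_uIcc_le_right huv) (sInf_image_uIcc_le_left hvw)
  have := min_add_max (sInf (f '' uIcc u v)) (sInf (f '' uIcc v w))
  simp only [excursionDist]
  linarith

end

theorem excursion_premetric_general (f : ℝ → ℝ)
    (hnn : ∀ x ∈ Icc (0 : ℝ) 1, 0 ≤ f x)
    (d : ℝ → ℝ → ℝ)
    (hd : ∀ u v : ℝ, u ≤ v → d u v = f u + f v - 2 * sInf (f '' Icc u v))
    (hdsymm : ∀ u v : ℝ, d u v = d v u) :
    (∀ u ∈ Icc (0 : ℝ) 1, d u u = 0) ∧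
    (∀ u ∈ Icc (0 : ℝ) 1, ∀ v ∈ Icc (0 : ℝ) 1, 0 ≤ d u v) ∧
    (∀ u ∈ Icc (0 : ℝ) 1, ∀ v ∈ Icc (0 : ℝ) 1, d u v = d v u) ∧
    (∀ u ∈ Icc (0 : ℝ) 1, ∀ v ∈ Icc (0 : ℝ) 1, ∀ w ∈ Icc (0 : ℝ) 1,
      d u w ≤ d u v + d v w) := by
  have hd_eq : d = excursionDist f := by
    ext u v
    rcases le_total u v with huv | hvu
    · rw [hd u v huv, excursionDist, uIcc_of_le huv]
    · rw [hdsymm, hd v u hvu, excursionDist, uIcc_of_ge hvu, add_comm]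
  have hbdd : ∀ u ∈ Icc (0 : ℝ) 1, ∀ v ∈ Icc (0 : ℝ) 1, BddBelow (f '' uIcc u v) :=
    fun u hu v hv => ⟨0, forall_mem_image.2 fun x hx => hnn x (uIcc_subset_Icc hu hv hx)⟩
  subst hd_eq
  exact ⟨fun u _ => excursionDist_self f u,
    fun u hu v hv => excursionDist_nonneg (hbdd u hu v hv),
    fun u _ v _ => excursionDist_comm f u v,
    fun u hu v hv w hw => excursionDist_triangle (hbdd u hu v hv) (hbdd v hv w hw)⟩

/-- The distance function coded by a continuous excursion `f : [0,1] → [0,∞)` with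
`f(0) = f(1) = 0`, namely `d(u,v) = f(u) + f(v) − 2 inf_{u ≤ s ≤ v} f(s)` (and symmetrically
for `v ≤ u`), is a premetric on `[0,1]`: nonnegative, symmetric, vanishing on the diagonal,
and satisfying the triangle inequality. -/
theorem excursion_premetric (f : ℝ → ℝ)
    (hcont : ContinuousOn f (Icc 0 1))
    (hnn : ∀ x ∈ Icc (0 : ℝ) 1, 0 ≤ f x)
    (hf0 : f 0 = 0) (hf1 : f 1 = 0)
    (d : ℝ → ℝ → ℝ)
    (hd : ∀ u v : ℝ, u ≤ v → d u v = f u + f v - 2 * sInf (f '' Icc u v))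
    (hdsymm : ∀ u v : ℝ, d u v = d v u) :
    (∀ u ∈ Icc (0 : ℝ) 1, d u u = 0) ∧
    (∀ u ∈ Icc (0 : ℝ) 1, ∀ v ∈ Icc (0 : ℝ) 1, 0 ≤ d u v) ∧
    (∀ u ∈ Icc (0 : ℝ) 1, ∀ v ∈ Icc (0 : ℝ) 1, d u v = d v u) ∧
    (∀ u ∈ Icc (0 : ℝ) 1, ∀ v ∈ Icc (0 : ℝ) 1, ∀ w ∈ Icc (0 : ℝ) 1,
      d u w ≤ d u v + d v w) :=
  excursion_premetric_general f hnn d hd hdsymm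
end

section
/- Suppose A(z) = ∑ a_n z^n is a power series with nonnegative coefficients and radius of convergence ρ ∈ (0, ∞), and suppose there exist constants a, b > 0 and an integer k ≥ 2 such that A(x) ≥ x(a + b·A(x)^k) for all 0 ≤ x < ρ. Then A(ρ) = lim_{x↑ρ} A(x) < ∞. -/
open Filter

/-- If `A(z) = ∑ aₙ zⁿ` has nonnegative coefficients and radius of convergence
`ρ ∈ (0, ∞)`, and `A(x) ≥ x (a + b A(x)^k)` on `[0, ρ)` for constants `a, b > 0` and an
integer `k ≥ 2`, then the series converges at `ρ` and `A(ρ) = lim_{x ↑ ρ} A(x) < ∞`. -/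
theorem series_bounded_at_radius (a : ℕ → ℝ) (hnn : ∀ n, 0 ≤ a n)
    (ρ : ℝ) (hρ : 0 < ρ)
    (hconv : ∀ x : ℝ, 0 ≤ x → x < ρ → Summable (fun n => a n * x ^ n))
    (hdiv : ∀ x : ℝ, ρ < x → ¬ Summable (fun n => a n * x ^ n))
    (A : ℝ → ℝ) (hA : ∀ x, A x = ∑' n, a n * x ^ n)
    (ca cb : ℝ) (hca : 0 < ca) (hcb : 0 < cb) (k : ℕ) (hk : 2 ≤ k)
    (hineq : ∀ x : ℝ, 0 ≤ x → x < ρ → x * (ca + cb * A x ^ k) ≤ A x) :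
    Summable (fun n => a n * ρ ^ n) ∧
      Tendsto A (nhdsWithin ρ (Set.Iio ρ)) (nhds (∑' n, a n * ρ ^ n)) := by
  set M : ℝ := max 1 (2 / (ρ * cb)) with hM
  -- boundedness of A on [ρ/2, ρ)
  have hbound : ∀ x : ℝ, ρ / 2 ≤ x → x < ρ → A x ≤ M := by
    intro x hx1 hx2
    have hx0 : 0 ≤ x := le_trans (by positivity) hx1
    have hAnn : 0 ≤ A x := by
      rw [hA]
      exact tsum_nonneg fun n => mul_nonneg (hnn n) (pow_nonneg hx0 n)
    rcases eq_or_lt_of_le hAnn with hA0 | hApos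
    · rw [← hA0]; exact le_trans zero_le_one (le_max_left _ _)
    have key := hineq x hx0 hx2
    have h1 : x * cb * A x ^ k ≤ A x := by nlinarith [pow_nonneg hAnn k]
    rcases le_or_gt (A x) 1 with h | h
    · exact le_trans h (le_max_left _ _)
    -- A x > 1 case: A x ≤ A x ^ (k-1) ≤ 2/(ρ cb)
    have hk1 : 1 ≤ k - 1 := by omega
    have hpow : A x ^ (k - 1) ≤ 2 / (ρ * cb) := by
      have hxcb : 0 < x * cb := mul_pos (lt_of_lt_of_le (by positivity) hx1) hcb
      have hkk : A x ^ k = A x * A x ^ (k - 1) := by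
        rw [← pow_succ']
        congr 1
        omega
      rw [hkk] at h1
      have h2 : A x ^ (k - 1) ≤ 1 / (x * cb) := by
        rw [le_div_iff₀ hxcb]
        nlinarith
      refine le_trans h2 ?_
      rw [div_le_div_iff₀ hxcb (by positivity)]
      nlinarith
    refine le_trans ?_ (le_trans hpow (le_max_right _ _))
    exact le_self_pow₀ (le_of_lt h) (by omega)
  -- summability at ρ
  have hsum : Summable (fun n => a n * ρ ^ n) := by
    apply summable_of_sum_le (c := M)
      (fun n => mul_nonneg (hnn n) (pow_nonneg hρ.le n))
    intro s
    have hcont : ContinuousWithinAt (fun x : ℝ => ∑ n ∈ s, a n * x ^ n) (Set.Iio ρ) ρ :=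
      (Continuous.continuousWithinAt (by continuity))
    have hne : (nhdsWithin ρ (Set.Iio ρ)).NeBot := nhdsLT_neBot ρ
    refine le_of_tendsto hcont ?_
    filter_upwards [Ico_mem_nhdsLT_of_mem (Set.mem_Ioc.mpr ⟨half_lt_self hρ, le_refl ρ⟩)]
      with x hx
    obtain ⟨hx1, hx2⟩ := hx
    have hx0 : 0 ≤ x := le_trans (by positivity) hx1
    refine le_trans ?_ (hbound x hx1 hx2)
    rw [hA]
    exact Summable.sum_le_tsum s (fun n _ => mul_nonneg (hnn n) (pow_nonneg hx0 n)) (hconv x hx0 hx2)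
  refine ⟨hsum, ?_⟩
  -- Abel's limit theorem
  have habel := Real.tendsto_tsum_powerSeries_nhdsWithin_lt
    (f := fun n => a n * ρ ^ n) hsum.hasSum.tendsto_sum_nat
  have hmap : Tendsto (fun x : ℝ => x / ρ) (nhdsWithin ρ (Set.Iio ρ)) (nhdsWithin 1 (Set.Iio 1)) := by
    apply tendsto_nhdsWithin_of_tendsto_nhds_of_eventually_within
    · have : Tendsto (fun x : ℝ => x / ρ) (nhds ρ) (nhds (ρ / ρ)) :=
        (continuous_id.div_const ρ).tendsto ρ
      rw [div_self hρ.ne'] at this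
      exact this.mono_left nhdsWithin_le_nhds
    · filter_upwards [self_mem_nhdsWithin] with x hx
      exact (div_lt_one hρ).mpr hx
  have := habel.comp hmap
  convert this using 1
  funext x
  rw [hA]
  congr 1
  funext n
  simp only [Function.comp_apply, div_pow]
  field_simp
end

section
/- Let ξ and ζ be nonnegative integer random variables such that ζ has finite exponential moments (i.e., P(ζ = k) = O(γ₁^k) for some 0 < γ₁ < 1) and let χ ≥ 0 be a real random variable with finite exponential moments. Then there exists 0 < γ₂ < 1 and C > 0 such that ∑_{k=0}^∞ P(ζ = k)·k·P(χ_1 + ... + χ_k ≥ h/2) ≤ C·γ₂^h for all h ≥ 0, where χ_1, χ_2, ... are i.i.d. copies of χ. -/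
open MeasureTheory ProbabilityTheory Finset

/-! Choose `s > 0` so small that `γ₁ · 𝔼[exp (s χ)] < 1`; this is possible because the moment
generating function of `χ ≥ 0` is continuous at `0`, where it equals `1`. The Chernoff bound gives
`P(χ₁ + ⋯ + χ_k ≥ h/2) ≤ e^{-sh/2} 𝔼[exp (s χ)]^k`, so the `k`-th term of the series is at most
`C₁ e^{-sh/2} k (γ₁ 𝔼[exp (s χ)])^k`, and the series is bounded by a constant times
`(e^{-s/2})^h`. -/

namespace ProbabilityTheory

variable {Ω : Type*} [MeasurableSpace Ω] {μ : Measure Ω}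

section Nonneg

variable {X : Ω → ℝ} {t : ℝ}

lemma zero_mem_interior_integrableExpSet_of_nonneg [IsFiniteMeasure μ] (hX : 0 ≤ᵐ[μ] X)
    (ht : 0 < t) (hint : Integrable (fun ω ↦ Real.exp (t * X ω)) μ) :
    0 ∈ interior (integrableExpSet X μ) := by
  have hXm : AEMeasurable X μ :=
    Real.aemeasurable_of_aemeasurable_exp_mul ht.ne' hint.1.aemeasurable
  have hIio : Set.Iio t ⊆ integrableExpSet X μ := by
    intro s hs
    rcases le_total s 0 with hs0 | hs0
    · refine (integrable_const (1 : ℝ)).mono (hXm.const_mul s).exp.aestronglyMeasurable ?_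
      filter_upwards [hX] with ω hω
      simpa using mul_nonpos_of_nonpos_of_nonneg hs0 hω
    · exact integrable_exp_mul_of_nonneg_of_le hint hs0 hs.le
  exact interior_mono hIio (by rwa [isOpen_Iio.interior_eq])

lemma exists_pos_integrable_exp_mul_mgf_lt [IsProbabilityMeasure μ] (hX : 0 ≤ᵐ[μ] X)
    (ht : 0 < t) (hint : Integrable (fun ω ↦ Real.exp (t * X ω)) μ) {c : ℝ} (hc : 1 < c) :
    ∃ s > 0, Integrable (fun ω ↦ Real.exp (s * X ω)) μ ∧ mgf X μ s < c := by
  have h0 := isOpen_interior.mem_nhds (zero_mem_interior_integrableExpSet_of_nonneg hX ht hint)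
  have hmgf : ∀ᶠ s in nhds 0, mgf X μ s < c :=
    (continuousOn_mgf.continuousAt h0).eventually_lt continuousAt_const (by rwa [mgf_zero])
  have hint_near : ∀ᶠ s in nhds 0, s ∈ integrableExpSet X μ :=
    Filter.mem_of_superset h0 interior_subset
  obtain ⟨s, ⟨hs_int, hs_mgf⟩, hs⟩ :=
    (((hint_near.and hmgf).filter_mono nhdsWithin_le_nhds).and
      (self_mem_nhdsWithin (s := Set.Ioi (0 : ℝ)))).exists
  exact ⟨s, hs, hs_int, hs_mgf⟩

end Nonneg

lemma measureReal_sum_range_ge_le_exp_mul_mgf_pow {X : ℕ → Ω → ℝ}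
    (hmeas : ∀ i, Measurable (X i)) (hindep : iIndepFun X μ)
    (hident : ∀ i, IdentDistrib (X i) (X 0) μ μ) {t : ℝ} (ht : 0 ≤ t)
    (hint : Integrable (fun ω ↦ Real.exp (t * X 0 ω)) μ) (a : ℝ) (k : ℕ) :
    μ.real {ω | a ≤ ∑ i ∈ range k, X i ω} ≤ Real.exp (-t * a) * mgf (X 0) μ t ^ k := by
  have := hindep.isProbabilityMeasure
  have hint_i : ∀ i, Integrable (fun ω ↦ Real.exp (t * X i ω)) μ := fun i ↦
    ((hident i).comp (measurable_const_mul t).exp).integrable_iff.2 hint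
  have hmgf : mgf (∑ i ∈ range k, X i) μ t = mgf (X 0) μ t ^ k := by
    rw [hindep.mgf_sum hmeas,
      prod_congr rfl fun i _ ↦ congrFun (mgf_congr_identDistrib (hident i)) t, prod_const,
      card_range]
  simpa [hmgf] using measure_ge_le_exp_mul_mgf (X := ∑ i ∈ range k, X i) a ht
    (hindep.integrable_exp_mul_sum hmeas fun i _ ↦ hint_i i)

end ProbabilityTheory

lemma tsum_mul_natCast_mul_le_of_geometric {a p : ℕ → ℝ} {C γ B M : ℝ} (ha₀ : ∀ k, 0 ≤ a k)
    (hp₀ : ∀ k, 0 ≤ p k) (ha : ∀ k, a k ≤ C * γ ^ k) (hp : ∀ k, p k ≤ B * M ^ k) (hγ : 0 ≤ γ)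
    (hM : 0 ≤ M) (hγM : γ * M < 1) :
    ∑' k, a k * k * p k ≤ C * B * ∑' k : ℕ, k * (γ * M) ^ k := by
  have hsum : Summable fun k : ℕ ↦ (k : ℝ) * (γ * M) ^ k := by
    simpa using summable_pow_mul_geometric_of_norm_lt_one 1
      (by rwa [Real.norm_eq_abs, abs_of_nonneg (mul_nonneg hγ hM)])
  have hterm : ∀ k : ℕ, a k * k * p k ≤ C * B * (k * (γ * M) ^ k) := fun k ↦
    calc a k * k * p k ≤ C * γ ^ k * k * (B * M ^ k) :=
          mul_le_mul (mul_le_mul_of_nonneg_right (ha k) k.cast_nonneg) (hp k) (hp₀ k)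
            (mul_nonneg ((ha₀ k).trans (ha k)) k.cast_nonneg)
      _ = C * B * (k * (γ * M) ^ k) := by ring
  rw [← tsum_mul_left]
  have hsum' := hsum.mul_left (C * B)
  have hterm₀ : ∀ k : ℕ, 0 ≤ a k * k * p k := fun k ↦
    mul_nonneg (mul_nonneg (ha₀ k) k.cast_nonneg) (hp₀ k)
  exact Summable.tsum_le_tsum hterm (hsum'.of_nonneg_of_le hterm₀ hterm) hsum'

theorem mixed_sum_geometric_tail_general {Ω : Type*} [MeasurableSpace Ω] (μ : Measure Ω)
    [IsProbabilityMeasure μ] (ζ : Ω → ℕ)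
    (γ₁ C₁ : ℝ) (hγ₁0 : 0 < γ₁) (hγ₁1 : γ₁ < 1) (hC₁ : 0 < C₁)
    (hgeo : ∀ k : ℕ, (μ {ω | ζ ω = k}).toReal ≤ C₁ * γ₁ ^ k)
    (χ : ℕ → Ω → ℝ) (hχmeas : ∀ i, Measurable (χ i))
    (hχnn : ∀ i ω, 0 ≤ χ i ω)
    (hχindep : iIndepFun χ μ)
    (hχident : ∀ i, IdentDistrib (χ i) (χ 0) μ μ)
    (hχexp : ∃ t > (0 : ℝ), Integrable (fun ω => Real.exp (t * χ 0 ω)) μ) :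
    ∃ γ₂ : ℝ, 0 < γ₂ ∧ γ₂ < 1 ∧ ∃ C > (0 : ℝ), ∀ h : ℝ, 0 ≤ h →
      (∑' k : ℕ, (μ {ω | ζ ω = k}).toReal * k *
        (μ {ω | h / 2 ≤ ∑ i ∈ range k, χ i ω}).toReal) ≤
        C * Real.rpow γ₂ h := by
  obtain ⟨t, ht, hint⟩ := hχexp
  obtain ⟨s, hs, hint_s, hmgf⟩ := exists_pos_integrable_exp_mul_mgf_lt
    (ae_of_all _ (hχnn 0)) ht hint (one_lt_inv_iff₀.2 ⟨hγ₁0, hγ₁1⟩)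
  set M := mgf (χ 0) μ s
  have hM : 0 ≤ M := mgf_nonneg
  have hγ₁M : γ₁ * M < 1 := by
    simpa [hγ₁0.ne'] using mul_lt_mul_of_pos_left hmgf hγ₁0
  set S := ∑' k : ℕ, (k : ℝ) * (γ₁ * M) ^ k
  have hS : 0 ≤ S := tsum_nonneg fun k ↦ by positivity
  refine ⟨Real.exp (-(s / 2)), Real.exp_pos _, Real.exp_lt_one_iff.2 (by linarith),
    C₁ * S + 1, by positivity, fun h _ ↦ ?_⟩
  calc _ ≤ C₁ * Real.exp (-s * (h / 2)) * S :=
        tsum_mul_natCast_mul_le_of_geometric (fun _ ↦ ENNReal.toReal_nonneg)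
          (fun _ ↦ ENNReal.toReal_nonneg) hgeo
          (measureReal_sum_range_ge_le_exp_mul_mgf_pow hχmeas hχindep hχident hs.le hint_s _)
          hγ₁0.le hM hγ₁M
    _ ≤ (C₁ * S + 1) * Real.exp (-(s / 2)) ^ h := by
        rw [← Real.exp_mul, show -(s / 2) * h = -s * (h / 2) by ring]
        nlinarith [Real.exp_pos (-s * (h / 2))]

/-- Geometric decay of `P(ζ = k)` combined with i.i.d. nonnegative summands `χᵢ` having
finite exponential moments yields a geometric tail bound in `h` for
`∑_k P(ζ = k) · k · P(χ₁ + … + χ_k ≥ h/2)`. -/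
theorem mixed_sum_geometric_tail {Ω : Type*} [MeasurableSpace Ω] (μ : Measure Ω)
    [IsProbabilityMeasure μ] (ζ : Ω → ℕ) (hζ : Measurable ζ)
    (γ₁ C₁ : ℝ) (hγ₁0 : 0 < γ₁) (hγ₁1 : γ₁ < 1) (hC₁ : 0 < C₁)
    (hgeo : ∀ k : ℕ, (μ {ω | ζ ω = k}).toReal ≤ C₁ * γ₁ ^ k)
    (χ : ℕ → Ω → ℝ) (hχmeas : ∀ i, Measurable (χ i))
    (hχnn : ∀ i ω, 0 ≤ χ i ω)
    (hχindep : iIndepFun χ μ)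
    (hχident : ∀ i, IdentDistrib (χ i) (χ 0) μ μ)
    (hχexp : ∃ t > (0 : ℝ), Integrable (fun ω => Real.exp (t * χ 0 ω)) μ) :
    ∃ γ₂ : ℝ, 0 < γ₂ ∧ γ₂ < 1 ∧ ∃ C > (0 : ℝ), ∀ h : ℝ, 0 ≤ h →
      (∑' k : ℕ, (μ {ω | ζ ω = k}).toReal * k *
        (μ {ω | h / 2 ≤ ∑ i ∈ range k, χ i ω}).toReal) ≤
        C * Real.rpow γ₂ h :=
  mixed_sum_geometric_tail_general μ ζ γ₁ C₁ hγ₁0 hγ₁1 hC₁ hgeo χ hχmeas hχnn hχindep hχident hχexp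
end

section
/- Let (X_i)_{i≥0} be the Markov chain on {1, ..., k} with transitions P(i → i) = (k−i)/k for 1 ≤ i ≤ k−1, P(i → i−1) = i/k for 2 ≤ i ≤ k, and P(1 → k) = 1/k, started from X_0 = 1, and let d_ℓ = 1 + ∑_{i=1}^ℓ 1{X_i = k}. Then there exist constants a, b > 0 such that for all sufficiently small ε > 0 and all ℓ ≥ 1, P(|d_ℓ − 1 − b_k·ℓ| ≥ ε·ℓ) ≤ a·exp(−b·ε²·ℓ), where b_k = (k·∑_{i=1}^k 1/i)^{−1}. -/
/-!
Write `H_n` for the harmonic numbers, `f = 1{· = k}` and `b_k = (k H_k)⁻¹`. The function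
`h(i) = 1 - H_i / H_k + 1{i = k}` solves the Poisson equation `P h = h - f + b_k`, and
`0 ≤ h ≤ 1`. Hence `∑_{i=1}^ℓ (f(X_i) - b_k) + (P h)(X_ℓ)` has increments
`h(X_{i+1}) - (P h)(X_i)`, whose conditional exponential moments are at most `exp t²` for
`|t| ≤ 1` because `eˣ ≤ 1 + x + x²` on `[-1, 1]`. Iterating over the paths of the chain bounds
`E exp (t (d_ℓ - 1 - b_k ℓ))` by `exp (2|t| + ℓ t²)`, and the Chernoff bound with `t = ± ε / 2`
gives `P(|d_ℓ - 1 - b_k ℓ| ≥ ε ℓ) ≤ 2 e^ε exp (-ε² ℓ / 4)`.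
-/

open MeasureTheory Finset

lemma Fin.sum_ite_val_eq {M : Type*} [AddCommMonoid M] {k m : ℕ} (hm : m < k) (g : Fin k → M) :
    (∑ x : Fin k, if (x : ℕ) = m then g x else 0) = g ⟨m, hm⟩ := by
  rw [← Fintype.sum_ite_eq' (⟨m, hm⟩ : Fin k) g]
  exact sum_congr rfl fun x _ => by simp only [Fin.ext_iff]

lemma Fin.sum_fun_succ_eq_sum_sum_snoc {α β : Type*} [Fintype α] [AddCommMonoid β] {n : ℕ}
    (F : (Fin (n + 2) → α) → β) :
    ∑ s, F s = ∑ s : Fin (n + 1) → α, ∑ j, F (Fin.snoc s j) := by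
  rw [← (Fin.snocEquiv fun _ => α).sum_comp, Fintype.sum_prod_type, sum_comm]
  rfl

lemma Finset.sum_filter_le_abs_le {ι : Type*} (s : Finset ι) {w : ι → ℝ} (hw : ∀ i, 0 ≤ w i)
    (S : ι → ℝ) (r : ℝ) :
    ∑ i ∈ s with r ≤ |S i|, w i ≤ ∑ i ∈ s with r ≤ S i, w i + ∑ i ∈ s with r ≤ -S i, w i := by
  rw [sum_filter, sum_filter, sum_filter, ← sum_add_distrib]
  refine sum_le_sum fun i _ => ?_
  rcases abs_cases (S i) with ⟨hS, _⟩ | ⟨hS, _⟩ <;> rw [hS] <;> split_ifs <;> linarith [hw i]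

lemma harmonic_monotone : Monotone harmonic :=
  monotone_nat_of_le_succ fun n => by
    rw [harmonic_succ]; exact le_add_of_nonneg_right (by positivity)

lemma harmonic_cast_eq_sum (n : ℕ) : (harmonic n : ℝ) = ∑ i ∈ range n, (1 : ℝ) / (i + 1) := by
  simp [harmonic, one_div]

namespace MarkovChain

open Matrix

variable {α : Type*}

def pathWeight (π₀ : α → ℝ) (P : Matrix α α ℝ) {n : ℕ} (s : Fin (n + 1) → α) : ℝ :=
  π₀ (s 0) * ∏ i : Fin n, P (s i.castSucc) (s i.succ)

def pathSum (f : α → ℝ) {n : ℕ} (s : Fin (n + 1) → α) : ℝ :=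
  ∑ i : Fin n, f (s i.succ)

variable {π₀ : α → ℝ} {P : Matrix α α ℝ} {f h : α → ℝ} {c M t : ℝ}

lemma pathWeight_snoc {n : ℕ} (s : Fin (n + 1) → α) (j : α) :
    pathWeight π₀ P (Fin.snoc s j : Fin (n + 2) → α) =
      pathWeight π₀ P s * P (s (Fin.last n)) j := by
  simp only [pathWeight, Fin.prod_univ_castSucc, Fin.succ_castSucc, Fin.snoc_castSucc,
    Fin.succ_last, Fin.snoc_last, mul_assoc]
  rfl

lemma pathSum_snoc {n : ℕ} (s : Fin (n + 1) → α) (j : α) :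
    pathSum f (Fin.snoc s j : Fin (n + 2) → α) = pathSum f s + f j := by
  simp only [pathSum, Fin.sum_univ_castSucc, Fin.succ_castSucc, Fin.snoc_castSucc, Fin.succ_last,
    Fin.snoc_last]

lemma pathSum_neg {n : ℕ} (s : Fin (n + 1) → α) : pathSum (-f) s = -pathSum f s := by
  simp only [pathSum, Pi.neg_apply, sum_neg_distrib]

lemma pathSum_eq_sum_Icc (n : ℕ) (σ : ℕ → α) :
    pathSum f (fun i : Fin (n + 1) => σ i) = ∑ i ∈ Icc 1 n, f (σ i) := by
  rw [pathSum, ← Ico_add_one_right_eq_Icc, sum_Ico_eq_sum_range, add_tsub_cancel_right]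
  simp only [Fin.val_succ, Fin.sum_univ_eq_sum_range (fun i => f (σ (i + 1))), add_comm]

section Cylinders

variable {Ω : Type*} [MeasurableSpace Ω] (μ : Measure Ω) (X : ℕ → Ω → α)

def HasTransitionMatrix (P : Matrix α α ℝ) : Prop :=
  ∀ (n : ℕ) (σ : ℕ → α), (μ {ω | ∀ i ≤ n + 1, X i ω = σ i}).toReal =
    (μ {ω | ∀ i ≤ n, X i ω = σ i}).toReal * P (σ n) (σ (n + 1))

variable {μ X}

lemma toReal_measure_cylinder_nat (hX : HasTransitionMatrix μ X P) (n : ℕ) (σ : ℕ → α) :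
    (μ {ω | ∀ i ≤ n, X i ω = σ i}).toReal =
      (μ {ω | X 0 ω = σ 0}).toReal * ∏ i ∈ range n, P (σ i) (σ (i + 1)) := by
  induction n with
  | zero => simp
  | succ n ih => rw [hX, ih, prod_range_succ, mul_assoc]

lemma toReal_measure_cylinder (hX : HasTransitionMatrix μ X P) {n : ℕ} (s : Fin (n + 1) → α) :
    (μ {ω | ∀ i : Fin (n + 1), X i ω = s i}).toReal =
      pathWeight (fun x => (μ {ω | X 0 ω = x}).toReal) P s := by
  have hclamp : ∀ i : Fin (n + 1), Fin.clamp i n = i := fun i =>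
    Fin.ext (min_eq_left (Nat.lt_succ_iff.1 i.isLt))
  have hcyl : {ω | ∀ i : Fin (n + 1), X i ω = s i} =
      {ω | ∀ i ≤ n, X i ω = s (Fin.clamp i n)} := by
    ext ω
    refine ⟨fun h i hi => ?_, fun h i => ?_⟩
    · simpa [Fin.clamp, min_eq_left hi] using h ⟨i, Nat.lt_succ_of_le hi⟩
    · simpa [hclamp] using h i (Nat.lt_succ_iff.1 i.isLt)
  rw [hcyl, toReal_measure_cylinder_nat hX, pathWeight,
    ← Fin.prod_univ_eq_prod_range (fun i => P (s (Fin.clamp i n)) (s (Fin.clamp (i + 1) n)))]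
  refine congrArg₂ _ rfl (prod_congr rfl fun i _ => ?_)
  rw [show Fin.clamp i n = i.castSucc from Fin.ext (min_eq_left i.isLt.le),
    show Fin.clamp (i + 1) n = i.succ from Fin.ext (min_eq_left i.isLt)]

variable [Fintype α]

lemma measure_path_mem_le (n : ℕ) (Q : (Fin (n + 1) → α) → Prop) [DecidablePred Q] :
    μ {ω | Q fun i => X i ω} ≤
      ∑ s : Fin (n + 1) → α with Q s, μ {ω | ∀ i : Fin (n + 1), X i ω = s i} := by
  refine le_trans (measure_mono fun ω hω => ?_) (measure_biUnion_finset_le _ _)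
  exact Set.mem_biUnion (x := fun i : Fin (n + 1) => X i ω) (mem_filter.2 ⟨mem_univ _, hω⟩)
    fun _ => rfl

lemma sum_toReal_measure_eq_one [MeasurableSpace α] [MeasurableSingletonClass α]
    [IsProbabilityMeasure μ] (hX : Measurable (X 0)) :
    ∑ x, (μ {ω | X 0 ω = x}).toReal = 1 := by
  rw [← ENNReal.toReal_sum fun _ _ => measure_ne_top _ _]
  have hfib := sum_measure_preimage_singleton (μ := μ) univ fun y _ =>
    hX (measurableSet_singleton y)
  rw [coe_univ, Set.preimage_univ, measure_univ] at hfib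
  exact congrArg ENNReal.toReal hfib |>.trans ENNReal.toReal_one

end Cylinders

variable [Fintype α] [DecidableEq α]

lemma pathWeight_nonneg (hπ₀ : ∀ x, 0 ≤ π₀ x) (hP : P ∈ rowStochastic ℝ α) {n : ℕ}
    (s : Fin (n + 1) → α) : 0 ≤ pathWeight π₀ P s :=
  mul_nonneg (hπ₀ _) (prod_nonneg fun _ _ => nonneg_of_mem_rowStochastic hP)

lemma abs_mulVec_le (hP : P ∈ rowStochastic ℝ α) (hh : ∀ x, |h x| ≤ M) (x : α) :
    |(P *ᵥ h) x| ≤ M := by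
  calc |(P *ᵥ h) x| ≤ ∑ j, P x j * |h j| := by
        simp only [mulVec, dotProduct]
        refine (abs_sum_le_sum_abs _ _).trans_eq (sum_congr rfl fun j _ => ?_)
        rw [abs_mul, abs_of_nonneg (nonneg_of_mem_rowStochastic hP)]
    _ ≤ ∑ j, P x j * M := sum_le_sum fun j _ =>
        mul_le_mul_of_nonneg_left (hh j) (nonneg_of_mem_rowStochastic hP)
    _ = M := by rw [← sum_mul, sum_row_of_mem_rowStochastic hP, one_mul]

lemma sum_mul_exp_le (hP : P ∈ rowStochastic ℝ α) (hh : ∀ x, |h x| ≤ M) (ht : |t| * M ≤ 1)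
    (x : α) : ∑ j, P x j * Real.exp (t * h j) ≤ Real.exp (t * (P *ᵥ h) x + t ^ 2 * M ^ 2) := by
  have hexp : ∀ j, Real.exp (t * h j) ≤ 1 + t * h j + t ^ 2 * M ^ 2 := fun j => by
    have hx : |t * h j| ≤ 1 := by
      rw [abs_mul]; exact (mul_le_mul_of_nonneg_left (hh j) (abs_nonneg t)).trans ht
    have hsq : (t * h j) ^ 2 ≤ t ^ 2 * M ^ 2 := by
      rw [mul_pow, ← sq_abs (h j)]
      exact mul_le_mul_of_nonneg_left (pow_le_pow_left₀ (abs_nonneg _) (hh j) 2) (sq_nonneg t)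
    linarith [(abs_le.1 (Real.abs_exp_sub_one_sub_id_le hx)).2]
  calc ∑ j, P x j * Real.exp (t * h j)
      ≤ ∑ j, P x j * (1 + t * h j + t ^ 2 * M ^ 2) := sum_le_sum fun j _ =>
        mul_le_mul_of_nonneg_left (hexp j) (nonneg_of_mem_rowStochastic hP)
    _ = t * (P *ᵥ h) x + t ^ 2 * M ^ 2 * ∑ j, P x j + ∑ j, P x j := by
        simp only [mulVec, dotProduct, mul_sum, ← sum_add_distrib]
        exact sum_congr rfl fun j _ => by ring
    _ = t * (P *ᵥ h) x + t ^ 2 * M ^ 2 + 1 := by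
        rw [sum_row_of_mem_rowStochastic hP, mul_one]
    _ ≤ _ := Real.add_one_le_exp _

lemma sum_pathWeight_snoc_mul_exp_le (hπ₀ : ∀ x, 0 ≤ π₀ x) (hP : P ∈ rowStochastic ℝ α)
    (hpoisson : ∀ x, (P *ᵥ h) x = h x - f x + c) (hh : ∀ x, |h x| ≤ M) (ht : |t| * M ≤ 1)
    {n : ℕ} (s : Fin (n + 1) → α) :
    ∑ j, pathWeight π₀ P (Fin.snoc s j : Fin (n + 2) → α) *
        Real.exp (t * (pathSum f (Fin.snoc s j : Fin (n + 2) → α) - c * (n + 1) + (P *ᵥ h) j)) ≤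
      pathWeight π₀ P s * Real.exp (t * (pathSum f s - c * n + (P *ᵥ h) (s (Fin.last n)))) *
        Real.exp (t ^ 2 * M ^ 2) := by
  set A := pathSum f s - c * n
  have hsplit : ∀ j, pathWeight π₀ P (Fin.snoc s j : Fin (n + 2) → α) *
      Real.exp (t * (pathSum f (Fin.snoc s j : Fin (n + 2) → α) - c * (n + 1) + (P *ᵥ h) j)) =
      pathWeight π₀ P s * Real.exp (t * A) * (P (s (Fin.last n)) j * Real.exp (t * h j)) := by
    intro j
    rw [pathWeight_snoc, pathSum_snoc, hpoisson,
      show pathSum f s + f j - c * (n + 1) + (h j - f j + c) = A + h j by ring, mul_add,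
      Real.exp_add]
    ring
  calc _ = pathWeight π₀ P s * Real.exp (t * A) *
        ∑ j, P (s (Fin.last n)) j * Real.exp (t * h j) := by
        rw [mul_sum]; exact sum_congr rfl fun j _ => hsplit j
    _ ≤ pathWeight π₀ P s * Real.exp (t * A) *
        Real.exp (t * (P *ᵥ h) (s (Fin.last n)) + t ^ 2 * M ^ 2) :=
        mul_le_mul_of_nonneg_left (sum_mul_exp_le hP hh ht _)
          (mul_nonneg (pathWeight_nonneg hπ₀ hP s) (Real.exp_pos _).le)
    _ = _ := by rw [mul_assoc, mul_assoc, ← Real.exp_add, ← Real.exp_add]; ring_nf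

theorem sum_pathWeight_mul_exp_le (hπ₀ : ∀ x, 0 ≤ π₀ x) (hP : P ∈ rowStochastic ℝ α)
    (hpoisson : ∀ x, (P *ᵥ h) x = h x - f x + c) (hh : ∀ x, |h x| ≤ M) (ht : |t| * M ≤ 1)
    (n : ℕ) :
    ∑ s : Fin (n + 1) → α, pathWeight π₀ P s *
        Real.exp (t * (pathSum f s - c * n + (P *ᵥ h) (s (Fin.last n)))) ≤
      (∑ x, π₀ x * Real.exp (t * (P *ᵥ h) x)) * Real.exp (n * (t ^ 2 * M ^ 2)) := by
  induction n with
  | zero =>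
    rw [← (Equiv.funUnique (Fin 1) α).symm.sum_comp]
    simp [pathWeight, pathSum]
  | succ n ih =>
    rw [Fin.sum_fun_succ_eq_sum_sum_snoc]
    simp only [Fin.snoc_last, Nat.cast_succ]
    calc _ ≤ ∑ s : Fin (n + 1) → α, pathWeight π₀ P s *
            Real.exp (t * (pathSum f s - c * n + (P *ᵥ h) (s (Fin.last n)))) *
              Real.exp (t ^ 2 * M ^ 2) := sum_le_sum fun s _ =>
          sum_pathWeight_snoc_mul_exp_le hπ₀ hP hpoisson hh ht s
      _ ≤ _ := by
          rw [← sum_mul, add_one_mul, Real.exp_add, ← mul_assoc]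
          exact mul_le_mul_of_nonneg_right ih (Real.exp_pos _).le

theorem sum_pathWeight_mul_exp_pathSum_le (hπ₀ : ∀ x, 0 ≤ π₀ x) (hπ₀1 : ∑ x, π₀ x ≤ 1)
    (hP : P ∈ rowStochastic ℝ α) (hpoisson : ∀ x, (P *ᵥ h) x = h x - f x + c)
    (hh : ∀ x, |h x| ≤ M) (ht : |t| * M ≤ 1) (n : ℕ) :
    ∑ s : Fin (n + 1) → α, pathWeight π₀ P s * Real.exp (t * (pathSum f s - c * n)) ≤
      Real.exp (2 * |t| * M + n * (t ^ 2 * M ^ 2)) := by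
  have hg : ∀ x, |t * (P *ᵥ h) x| ≤ |t| * M := fun x => by
    rw [abs_mul]; exact mul_le_mul_of_nonneg_left (abs_mulVec_le hP hh x) (abs_nonneg t)
  have hinit : ∑ x, π₀ x * Real.exp (t * (P *ᵥ h) x) ≤ Real.exp (|t| * M) :=
    calc _ ≤ ∑ x, π₀ x * Real.exp (|t| * M) := sum_le_sum fun x _ =>
          mul_le_mul_of_nonneg_left (Real.exp_le_exp.2 (le_of_abs_le (hg x))) (hπ₀ x)
      _ ≤ Real.exp (|t| * M) := by
          rw [← sum_mul]; exact mul_le_of_le_one_left (Real.exp_pos _).le hπ₀1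
  calc _ ≤ ∑ s : Fin (n + 1) → α, pathWeight π₀ P s *
          Real.exp (t * (pathSum f s - c * n + (P *ᵥ h) (s (Fin.last n)))) *
            Real.exp (|t| * M) := sum_le_sum fun s _ => by
        rw [mul_assoc, mul_add, Real.exp_add, mul_assoc, ← Real.exp_add]
        refine mul_le_mul_of_nonneg_left ?_ (pathWeight_nonneg hπ₀ hP s)
        refine le_mul_of_one_le_right (Real.exp_pos _).le (Real.one_le_exp ?_)
        linarith [neg_abs_le (t * (P *ᵥ h) (s (Fin.last n))), hg (s (Fin.last n))]
    _ ≤ Real.exp (|t| * M) * Real.exp (n * (t ^ 2 * M ^ 2)) * Real.exp (|t| * M) := by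
        rw [← sum_mul]
        refine mul_le_mul_of_nonneg_right ?_ (Real.exp_pos _).le
        exact (sum_pathWeight_mul_exp_le hπ₀ hP hpoisson hh ht n).trans
          (mul_le_mul_of_nonneg_right hinit (Real.exp_pos _).le)
    _ = _ := by rw [← Real.exp_add, ← Real.exp_add]; ring_nf

theorem sum_pathWeight_filter_le (hπ₀ : ∀ x, 0 ≤ π₀ x) (hπ₀1 : ∑ x, π₀ x ≤ 1)
    (hP : P ∈ rowStochastic ℝ α) (hpoisson : ∀ x, (P *ᵥ h) x = h x - f x + c)
    (hh : ∀ x, |h x| ≤ M) (ht0 : 0 ≤ t) (ht : t * M ≤ 1) (n : ℕ) (r : ℝ) :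
    ∑ s : Fin (n + 1) → α with r ≤ pathSum f s - c * n, pathWeight π₀ P s ≤
      Real.exp (2 * t * M + n * (t ^ 2 * M ^ 2) - t * r) := by
  calc _ ≤ ∑ s : Fin (n + 1) → α with r ≤ pathSum f s - c * n,
          pathWeight π₀ P s * Real.exp (t * (pathSum f s - c * n) - t * r) :=
        sum_le_sum fun s hs => le_mul_of_one_le_right (pathWeight_nonneg hπ₀ hP s)
          (Real.one_le_exp (by
            rw [← mul_sub]; exact mul_nonneg ht0 (sub_nonneg.2 (mem_filter.1 hs).2)))
    _ ≤ ∑ s : Fin (n + 1) → α,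
          pathWeight π₀ P s * Real.exp (t * (pathSum f s - c * n) - t * r) :=
        sum_le_sum_of_subset_of_nonneg (filter_subset _ _) fun s _ _ =>
          mul_nonneg (pathWeight_nonneg hπ₀ hP s) (Real.exp_pos _).le
    _ = (∑ s : Fin (n + 1) → α, pathWeight π₀ P s *
          Real.exp (t * (pathSum f s - c * n))) * Real.exp (-(t * r)) := by
        simp only [sum_mul, sub_eq_add_neg (t * _), Real.exp_add, mul_assoc]
    _ ≤ _ := by
        have hmgf := sum_pathWeight_mul_exp_pathSum_le hπ₀ hπ₀1 hP hpoisson hh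
          (by rwa [abs_of_nonneg ht0]) n
        rw [abs_of_nonneg ht0] at hmgf
        rw [sub_eq_add_neg _ (t * r), Real.exp_add]
        exact mul_le_mul_of_nonneg_right hmgf (Real.exp_pos _).le

theorem sum_pathWeight_abs_filter_le (hπ₀ : ∀ x, 0 ≤ π₀ x) (hπ₀1 : ∑ x, π₀ x ≤ 1)
    (hP : P ∈ rowStochastic ℝ α) (hpoisson : ∀ x, (P *ᵥ h) x = h x - f x + c)
    (hh : ∀ x, |h x| ≤ M) (hM : 0 < M) {ε : ℝ} (hε : 0 < ε) (hεM : ε ≤ 2 * M) (n : ℕ) :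
    ∑ s : Fin (n + 1) → α with ε * n ≤ |pathSum f s - c * n|, pathWeight π₀ P s ≤
      2 * Real.exp (ε / M) * Real.exp (-(1 / (4 * M ^ 2)) * ε ^ 2 * n) := by
  set t := ε / (2 * M ^ 2)
  have ht0 : 0 ≤ t := by positivity
  have ht : t * M ≤ 1 := by
    rw [div_mul_eq_mul_div, div_le_one (by positivity)]
    nlinarith
  have hexp : Real.exp (2 * t * M + n * (t ^ 2 * M ^ 2) - t * (ε * n)) =
      Real.exp (ε / M) * Real.exp (-(1 / (4 * M ^ 2)) * ε ^ 2 * n) := by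
    rw [← Real.exp_add]
    congr 1
    simp only [t]
    field_simp
    ring
  have hup := sum_pathWeight_filter_le hπ₀ hπ₀1 hP hpoisson hh ht0 ht n (ε * n)
  have hlo := sum_pathWeight_filter_le hπ₀ hπ₀1 hP (f := -f) (c := -c) (h := -h)
    (fun x => by simp [mulVec_neg, hpoisson]; ring) (by simpa using hh) ht0 ht n (ε * n)
  simp only [pathSum_neg, show ∀ a : ℝ, -a - -c * n = -(a - c * n) from fun a => by ring] at hlo
  rw [hexp] at hup hlo
  calc _ ≤ _ := sum_filter_le_abs_le _ (pathWeight_nonneg hπ₀ hP) _ _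
    _ ≤ _ := add_le_add hup hlo
    _ = _ := by ring

theorem toReal_measure_abs_sum_sub_ge_le {Ω : Type*} [MeasurableSpace Ω] {μ : Measure Ω}
    [IsProbabilityMeasure μ] [MeasurableSpace α] [MeasurableSingletonClass α] {X : ℕ → Ω → α}
    (hmeas : ∀ i, Measurable (X i)) (hX : HasTransitionMatrix μ X P)
    (hP : P ∈ rowStochastic ℝ α) (hpoisson : ∀ x, (P *ᵥ h) x = h x - f x + c)
    (hh : ∀ x, |h x| ≤ M) (hM : 0 < M) {ε : ℝ} (hε : 0 < ε) (hεM : ε ≤ 2 * M) (n : ℕ) :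
    (μ {ω | ε * n ≤ |∑ i ∈ Icc 1 n, f (X i ω) - c * n|}).toReal ≤
      2 * Real.exp (ε / M) * Real.exp (-(1 / (4 * M ^ 2)) * ε ^ 2 * n) := by
  simp only [← pathSum_eq_sum_Icc]
  calc _ ≤ (∑ s : Fin (n + 1) → α with ε * n ≤ |pathSum f s - c * n|,
          μ {ω | ∀ i : Fin (n + 1), X i ω = s i}).toReal :=
        ENNReal.toReal_mono (ENNReal.sum_ne_top.2 fun _ _ => measure_ne_top _ _)
          (measure_path_mem_le n fun s => ε * n ≤ |pathSum f s - c * n|)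
    _ = ∑ s : Fin (n + 1) → α with ε * n ≤ |pathSum f s - c * n|,
          pathWeight (fun x => (μ {ω | X 0 ω = x}).toReal) P s := by
        rw [ENNReal.toReal_sum fun _ _ => measure_ne_top _ _]
        exact sum_congr rfl fun s _ => toReal_measure_cylinder hX s
    _ ≤ _ := sum_pathWeight_abs_filter_le (fun _ => ENNReal.toReal_nonneg)
        (sum_toReal_measure_eq_one (hmeas 0)).le hP hpoisson hh hM hε hεM n

end MarkovChain

namespace KTreeChain

open Matrix

noncomputable def transition (k : ℕ) : Matrix (Fin k) (Fin k) ℝ := fun i j =>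
  (if j = i then ((k : ℝ) - ((i : ℕ) + 1)) / k else 0) +
  (if (j : ℕ) + 1 = (i : ℕ) then (((i : ℕ) : ℝ) + 1) / k else 0) +
  (if (i : ℕ) = 0 ∧ (j : ℕ) = k - 1 then 1 / (k : ℝ) else 0)

variable {k : ℕ}

lemma transition_mulVec_zero (hk : 0 < k) (v : Fin k → ℝ) :
    (transition k *ᵥ v) ⟨0, hk⟩ = (k - 1) / k * v ⟨0, hk⟩ + v ⟨k - 1, by omega⟩ / k := by
  simp only [mulVec, dotProduct, transition, CharP.cast_eq_zero, zero_add, Nat.add_eq_zero_iff,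
    one_ne_zero, and_false, ↓reduceIte, add_zero, true_and, one_div, add_mul, ite_mul, zero_mul,
    sum_add_distrib, sum_ite_eq', mem_univ, Fin.sum_ite_val_eq (by omega : k - 1 < k)]
  ring

lemma transition_mulVec_succ {m : ℕ} (hm : m + 1 < k) (v : Fin k → ℝ) :
    (transition k *ᵥ v) ⟨m + 1, hm⟩ =
      (k - (m + 2)) / k * v ⟨m + 1, hm⟩ + (m + 2) / k * v ⟨m, by omega⟩ := by
  simp only [mulVec, dotProduct, transition, Nat.cast_add, Nat.cast_one, Nat.add_right_cancel_iff,
    Nat.add_eq_zero_iff, one_ne_zero, and_false, false_and, ↓reduceIte, add_zero, add_mul, ite_mul,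
    zero_mul, sum_add_distrib, sum_ite_eq', mem_univ, Fin.sum_ite_val_eq (by omega : m < k)]
  ring

lemma transition_mem_rowStochastic : transition k ∈ rowStochastic ℝ (Fin k) := by
  refine ⟨fun i j => ?_, funext fun ⟨x, hx⟩ => ?_⟩
  · have hi : ((i : ℕ) : ℝ) + 1 ≤ k := by exact_mod_cast i.isLt
    refine add_nonneg (add_nonneg ?_ ?_) ?_ <;> split_ifs <;> positivity
  · have hk : (k : ℝ) ≠ 0 := Nat.cast_ne_zero.2 (Nat.ne_zero_of_lt hx)
    rcases x with _ | m
    · simp only [transition_mulVec_zero hx, Pi.one_apply, mul_one, one_div]; field_simp; ring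
    · simp only [transition_mulVec_succ hx, Pi.one_apply, mul_one]; field_simp; ring

noncomputable def poissonSolution (k : ℕ) (x : Fin k) : ℝ :=
  (harmonic k - harmonic (x + 1)) / harmonic k + if (x : ℕ) = k - 1 then 1 else 0

lemma poissonSolution_of_ne {x : Fin k} (hx : (x : ℕ) ≠ k - 1) :
    poissonSolution k x = (harmonic k - harmonic (x + 1)) / harmonic k := by
  simp [poissonSolution, hx]

lemma poissonSolution_top (hk : 0 < k) : poissonSolution k ⟨k - 1, by omega⟩ = 1 := by
  simp [poissonSolution, Nat.sub_add_cancel hk]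

theorem transition_mulVec_poissonSolution (hk : 2 ≤ k) (x : Fin k) :
    (transition k *ᵥ poissonSolution k) x =
      poissonSolution k x - (if x = ⟨k - 1, Nat.sub_one_lt_of_lt hk⟩ then 1 else 0) +
        ((k : ℝ) * harmonic k)⁻¹ := by
  have hH : (0 : ℝ) < harmonic k := by exact_mod_cast harmonic_pos (by omega)
  have hk0 : (k : ℝ) ≠ 0 := by positivity
  obtain ⟨_ | m, hx⟩ := x
  · rw [transition_mulVec_zero, poissonSolution_top (by omega),
      poissonSolution_of_ne (by simp; omega), if_neg (by simp [Fin.ext_iff]; omega)]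
    simp only [zero_add, harmonic_succ, harmonic_zero]
    field_simp
    ring
  · rw [transition_mulVec_succ, poissonSolution_of_ne (x := ⟨m, _⟩) (by simp; omega)]
    have hsucc : (harmonic (m + 2) : ℝ) = harmonic (m + 1) + 1 / (m + 2) := by
      rw [harmonic_succ]; push_cast; ring
    rcases eq_or_ne (m + 1) (k - 1) with htop | htop
    · obtain rfl : k = m + 2 := by omega
      simp only [htop, poissonSolution_top (by omega : 0 < m + 2), if_true, hsucc]
      push_cast
      field_simp
      ring
    · rw [poissonSolution_of_ne (by simpa using htop), if_neg (by simp [Fin.ext_iff, htop])]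
      simp only [hsucc]
      field_simp
      ring

lemma abs_poissonSolution_le (x : Fin k) : |poissonSolution k x| ≤ 1 := by
  rcases eq_or_ne (x : ℕ) (k - 1) with hx | hx
  · rw [show x = ⟨k - 1, by omega⟩ from Fin.ext hx, poissonSolution_top (by omega), abs_one]
  · have hH : (0 : ℝ) < harmonic k := by exact_mod_cast harmonic_pos (by omega)
    have hmono : (harmonic (x + 1) : ℝ) ≤ harmonic k := by exact_mod_cast harmonic_monotone x.isLt
    have hnonneg : (0 : ℝ) ≤ harmonic (x + 1) := by
      exact_mod_cast (harmonic_zero.symm.trans_le (harmonic_monotone (Nat.zero_le _)))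
    rw [poissonSolution_of_ne hx, abs_div, abs_of_pos hH, abs_of_nonneg (sub_nonneg.2 hmono),
      div_le_one hH]
    linarith

end KTreeChain

/-- Concentration for the number of visits to state `k` of the `k`-state Markov chain
arising in random `k`-trees (states are `1, …, k`, encoded as `Fin k` via `i ↦ i − 1`):
transitions `P(i → i) = (k−i)/k` for `1 ≤ i ≤ k−1`, `P(i → i−1) = i/k` for `2 ≤ i ≤ k`,
`P(1 → k) = 1/k`, started from state `1`. With `d_ℓ = 1 + ∑_{i=1}^ℓ 1{X_i = k}` and
`b_k = (k ∑_{i=1}^k 1/i)⁻¹`, there are `a, b > 0` such that for all small enough `ε > 0`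
and all `ℓ ≥ 1`, `P(|d_ℓ − 1 − b_k ℓ| ≥ ε ℓ) ≤ a exp(−b ε² ℓ)`. -/
theorem ktree_chain_concentration (k : ℕ) (hk : 2 ≤ k)
    {Ω : Type*} [MeasurableSpace Ω] (μ : Measure Ω) [IsProbabilityMeasure μ]
    (X : ℕ → Ω → Fin k) (hmeas : ∀ i, Measurable (X i))
    (P : Matrix (Fin k) (Fin k) ℝ)
    (hP : ∀ i j : Fin k, P i j =
      (if j = i then ((k : ℝ) - ((i : ℕ) + 1)) / k else 0) +
      (if (j : ℕ) + 1 = (i : ℕ) then (((i : ℕ) : ℝ) + 1) / k else 0) +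
      (if (i : ℕ) = 0 ∧ (j : ℕ) = k - 1 then 1 / (k : ℝ) else 0))
    (hmarkov : ∀ (n : ℕ) (s : ℕ → Fin k),
      (μ {ω | ∀ i ≤ n + 1, X i ω = s i}).toReal =
        (μ {ω | ∀ i ≤ n, X i ω = s i}).toReal * P (s n) (s (n + 1))) :
    ∃ a > (0 : ℝ), ∃ b > (0 : ℝ), ∃ ε₀ > (0 : ℝ), ∀ ε : ℝ, 0 < ε → ε ≤ ε₀ →
      ∀ ℓ : ℕ, 1 ≤ ℓ →
        (μ {ω | ε * ℓ ≤
            |(∑ i ∈ Icc 1 ℓ, if X i ω = (⟨k - 1, by omega⟩ : Fin k) then (1 : ℝ) else 0) -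
              (↑k * ∑ i ∈ range k, (1 : ℝ) / (i + 1))⁻¹ * ℓ|}).toReal ≤
          a * Real.exp (-b * ε ^ 2 * ℓ) := by
  obtain rfl : P = KTreeChain.transition k := Matrix.ext hP
  refine ⟨2 * Real.exp 2, by positivity, 1 / 4, by norm_num, 2, two_pos,
    fun ε hε hε₂ ℓ _ => ?_⟩
  simp only [← harmonic_cast_eq_sum]
  calc _ ≤ 2 * Real.exp (ε / 1) * Real.exp (-(1 / (4 * 1 ^ 2)) * ε ^ 2 * ℓ) :=
        MarkovChain.toReal_measure_abs_sum_sub_ge_le hmeas hmarkov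
          KTreeChain.transition_mem_rowStochastic (KTreeChain.transition_mulVec_poissonSolution hk)
          KTreeChain.abs_poissonSolution_le one_pos hε (by linarith) ℓ
    _ ≤ _ := by norm_num; gcongr
end
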